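/- Let p ≥ 2 be an even integer. Then sup over nonzero 2π-periodic odd η ∈ L^{2p}(𝕋) of the quotient (∫₀^{2π}∫₀^{2π} (η(s₁)−η(s₂))^p ds₁ds₂)² / (2 ∫₀^{2π}∫₀^{2π} (η(s₁)−η(s₂))^{2p} ds₁ds₂) is at most π². -/

import Mathlib

open MeasureTheory Real intervalIntegral

/-! Expanding `(η s₁ - η s₂) ^ n` binomially writes the double integral as
`∑ C(n, m) M_m M_(n-m)` in the moments `M_j = ∫ η ^ j`, and the odd moments vanish because `η` is
odd and `2π`-periodic. For `n = p` every surviving term is bounded above by `2π M_p` by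
Chebyshev's inequality (`η ^ a` and `η ^ b` are similarly ordered for even `a`, `b`); for `n = 2p`
every surviving term is bounded below by `M_p ^ 2` by Cauchy–Schwarz. The even binomial
coefficients add up to `2 ^ (n - 1)`, so `∫∫ (η s₁ - η s₂) ^ p ≤ 2 ^ p π M_p` and
`∫∫ (η s₁ - η s₂) ^ (2p) ≥ 2 ^ (2p - 1) M_p ^ 2`, and the bound follows. -/

open ProbabilityTheory Finset

section Moments

variable {α β : Type*} [MeasurableSpace α] [MeasurableSpace β] {μ : Measure α} {f : α → ℝ}

lemma integrable_pow_of_le [IsFiniteMeasure μ] (hf : AEStronglyMeasurable f μ) {j N : ℕ}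
    (hjN : j ≤ N) (hN : Integrable (fun x => |f x| ^ N) μ) :
    Integrable (fun x => f x ^ j) μ :=
  (integrable_norm_pow_of_le hf hjN hN).mono' (hf.pow j)
    (ae_of_all _ fun x => (norm_pow (f x) j).le)

lemma integral_integral_sum_mul {ν : Measure β} {ι : Type*} (s : Finset ι) {F : ι → α → ℝ}
    {G : ι → β → ℝ} (hF : ∀ i ∈ s, Integrable (F i) μ) (hG : ∀ i ∈ s, Integrable (G i) ν) :
    ∫ x, ∫ y, ∑ i ∈ s, F i x * G i y ∂ν ∂μ = ∑ i ∈ s, (∫ x, F i x ∂μ) * ∫ y, G i y ∂ν := by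
  have inner : ∀ x, ∫ y, ∑ i ∈ s, F i x * G i y ∂ν = ∑ i ∈ s, F i x * ∫ y, G i y ∂ν := fun x => by
    rw [integral_finsetSum s fun i hi => (hG i hi).const_mul _]
    simp only [MeasureTheory.integral_const_mul]
  simp only [inner]
  rw [integral_finsetSum s fun i hi => (hF i hi).mul_const _]
  simp only [MeasureTheory.integral_mul_const]

lemma integral_integral_sub_pow {n : ℕ} (hf : ∀ j ≤ n, Integrable (fun x => f x ^ j) μ) :
    ∫ x, ∫ y, (f x - f y) ^ n ∂μ ∂μ =
      ∑ m ∈ range (n + 1), n.choose m * ((-1) ^ (m + n) * (moment f m μ * moment f (n - m) μ)) := by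
  have hexp : ∀ x y, (f x - f y) ^ n =
      ∑ m ∈ range (n + 1), (n.choose m * (-1) ^ (m + n) * f x ^ m) * f y ^ (n - m) := fun x y => by
    rw [sub_pow]
    exact sum_congr rfl fun m _ => by ring
  simp only [hexp]
  rw [integral_integral_sum_mul _
    (fun m hm => (hf m (by simp at hm; omega)).const_mul _) (fun m _ => hf (n - m) (by omega))]
  refine sum_congr rfl fun m _ => ?_
  simp only [MeasureTheory.integral_const_mul, moment, Pi.pow_apply]
  ring

lemma integral_integral_sub_pow_of_even {n : ℕ} (hn : Even n)
    (hf : ∀ j ≤ n, Integrable (fun x => f x ^ j) μ)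
    (hodd : ∀ j ≤ n, Odd j → moment f j μ = 0) :
    ∫ x, ∫ y, (f x - f y) ^ n ∂μ ∂μ =
      ∑ m ∈ range (n + 1), n.choose m * (moment f m μ * moment f (n - m) μ) := by
  rw [integral_integral_sub_pow hf]
  refine sum_congr rfl fun m hm => ?_
  rcases Nat.even_or_odd m with hm' | hm'
  · rw [(hm'.add hn).neg_one_pow, one_mul]
  · rw [hodd m (by simp at hm; omega) hm']
    simp

lemma sum_range_one_add_neg_one_pow_mul_choose {R : Type*} [CommRing R] {n : ℕ} (hn : n ≠ 0) :
    ∑ m ∈ range (n + 1), (1 + (-1 : R) ^ m) * n.choose m = 2 ^ n := by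
  have hsum : ∑ m ∈ range (n + 1), (n.choose m : R) = 2 ^ n := by
    simpa using congrArg (Nat.cast : ℕ → R) (Nat.sum_range_choose n)
  have halt : ∑ m ∈ range (n + 1), (-1 : R) ^ m * n.choose m = 0 := by
    simpa using congrArg (Int.cast : ℤ → R) (Int.alternating_sum_range_choose_of_ne hn)
  simp only [add_mul, one_mul, sum_add_distrib, hsum, halt, add_zero]

lemma two_mul_sum_choose_mul_le {n : ℕ} (hn : n ≠ 0) {T : ℕ → ℝ} {c : ℝ}
    (hodd : ∀ m ≤ n, Odd m → T m = 0) (heven : ∀ m ≤ n, Even m → T m ≤ c) :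
    2 * ∑ m ∈ range (n + 1), n.choose m * T m ≤ 2 ^ n * c := by
  have hterm : ∀ m ∈ range (n + 1), 2 * (n.choose m * T m) ≤ (1 + (-1) ^ m) * n.choose m * c := by
    intro m hm
    have hmn : m ≤ n := by simp at hm; omega
    rcases Nat.even_or_odd m with hm' | hm'
    · rw [hm'.neg_one_pow]
      nlinarith [heven m hmn hm', (Nat.cast_nonneg (n.choose m) : (0 : ℝ) ≤ _)]
    · simp [hodd m hmn hm', hm'.neg_one_pow]
  calc 2 * ∑ m ∈ range (n + 1), n.choose m * T m
      = ∑ m ∈ range (n + 1), 2 * (n.choose m * T m) := mul_sum _ _ _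
    _ ≤ ∑ m ∈ range (n + 1), (1 + (-1) ^ m) * n.choose m * c := sum_le_sum hterm
    _ = 2 ^ n * c := by rw [← sum_mul, sum_range_one_add_neg_one_pow_mul_choose hn]

lemma le_two_mul_sum_choose_mul {n : ℕ} (hn : n ≠ 0) {T : ℕ → ℝ} {c : ℝ}
    (hodd : ∀ m ≤ n, Odd m → T m = 0) (heven : ∀ m ≤ n, Even m → c ≤ T m) :
    2 ^ n * c ≤ 2 * ∑ m ∈ range (n + 1), n.choose m * T m := by
  have := two_mul_sum_choose_mul_le hn (T := fun m => -T m) (c := -c)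
    (fun m hm hm' => by simp [hodd m hm hm']) (fun m hm hm' => neg_le_neg (heven m hm hm'))
  simp only [mul_neg, sum_neg_distrib] at this
  linarith


lemma integral_mul_integral_le_measureReal_univ_mul_integral_mul [IsFiniteMeasure μ]
    {g h : α → ℝ} (hg : Integrable g μ) (hh : Integrable h μ)
    (hgh : Integrable (fun x => g x * h x) μ) (hmono : ∀ x y, 0 ≤ (g x - g y) * (h x - h y)) :
    (∫ x, g x ∂μ) * (∫ x, h x ∂μ) ≤ μ.real Set.univ * ∫ x, g x * h x ∂μ := by
  have key : 0 ≤ ∫ x, ∫ y, (g x - g y) * (h x - h y) ∂μ ∂μ :=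
    integral_nonneg fun x => integral_nonneg fun y => hmono x y
  have hexp : ∀ x y, (g x - g y) * (h x - h y) =
      ∑ i : Fin 4, ![fun x => g x * h x, g, h, fun _ => 1] i x *
        ![fun _ => 1, fun y => -h y, fun y => -g y, fun y => g y * h y] i y := fun x y => by
    simp only [Fin.sum_univ_four, Matrix.cons_val]
    ring
  simp only [hexp] at key
  rw [integral_integral_sum_mul _ (fun i _ => by fin_cases i <;> simp <;> assumption)
    (fun i _ => by fin_cases i <;> simp <;> assumption)] at key
  simp only [Fin.sum_univ_four, Matrix.cons_val, MeasureTheory.integral_const, smul_eq_mul,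
    mul_one, MeasureTheory.integral_neg] at key
  linarith

lemma sq_integral_mul_le_integral_sq_mul_integral_sq {g h : α → ℝ}
    (hg : Integrable (fun x => g x ^ 2) μ) (hh : Integrable (fun x => h x ^ 2) μ)
    (hgh : Integrable (fun x => g x * h x) μ) :
    (∫ x, g x * h x ∂μ) ^ 2 ≤ (∫ x, g x ^ 2 ∂μ) * ∫ x, h x ^ 2 ∂μ := by
  have hquad : ∀ t : ℝ, 0 ≤ (∫ x, g x ^ 2 ∂μ) * (t * t) + (2 * ∫ x, g x * h x ∂μ) * t +
      ∫ x, h x ^ 2 ∂μ := fun t => by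
    have e : ∀ x, (t * g x + h x) ^ 2 = t * t * g x ^ 2 + 2 * t * (g x * h x) + h x ^ 2 :=
      fun x => by ring
    have hint : ∫ x, (t * g x + h x) ^ 2 ∂μ = (∫ x, g x ^ 2 ∂μ) * (t * t) +
        (2 * ∫ x, g x * h x ∂μ) * t + ∫ x, h x ^ 2 ∂μ := by
      have hsum : Integrable (fun x => t * t * g x ^ 2 + 2 * t * (g x * h x)) μ :=
        (hg.const_mul _).add (hgh.const_mul _)
      simp only [e]
      rw [integral_add hsum hh,
        integral_add (hg.const_mul _) (hgh.const_mul _), MeasureTheory.integral_const_mul,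
        MeasureTheory.integral_const_mul]
      ring
    exact hint ▸ integral_nonneg fun x => sq_nonneg _
  have := discrim_le_zero hquad
  rw [discrim] at this
  nlinarith

lemma pow_sub_pow_mul_pow_sub_pow_nonneg {a b : ℕ} (ha : Even a) (hb : Even b) (x y : ℝ) :
    0 ≤ (x ^ a - y ^ a) * (x ^ b - y ^ b) := by
  rw [← ha.pow_abs x, ← ha.pow_abs y, ← hb.pow_abs x, ← hb.pow_abs y]
  rcases le_total |x| |y| with hxy | hxy
  · exact mul_nonneg_of_nonpos_of_nonpos
      (sub_nonpos.2 (pow_le_pow_left₀ (abs_nonneg x) hxy a))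
      (sub_nonpos.2 (pow_le_pow_left₀ (abs_nonneg x) hxy b))
  · exact mul_nonneg (sub_nonneg.2 (pow_le_pow_left₀ (abs_nonneg y) hxy a))
      (sub_nonneg.2 (pow_le_pow_left₀ (abs_nonneg y) hxy b))

lemma moment_mul_moment_le_of_even [IsFiniteMeasure μ] {a b : ℕ} (ha : Even a) (hb : Even b)
    (hfa : Integrable (fun x => f x ^ a) μ) (hfb : Integrable (fun x => f x ^ b) μ)
    (hfab : Integrable (fun x => f x ^ (a + b)) μ) :
    moment f a μ * moment f b μ ≤ μ.real Set.univ * moment f (a + b) μ := by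
  simp only [moment, Pi.pow_apply, pow_add] at hfab ⊢
  exact integral_mul_integral_le_measureReal_univ_mul_integral_mul hfa hfb hfab
    fun x y => pow_sub_pow_mul_pow_sub_pow_nonneg ha hb (f x) (f y)

lemma sq_moment_add_le_moment_mul_moment {a b : ℕ}
    (hfa : Integrable (fun x => f x ^ (2 * a)) μ) (hfb : Integrable (fun x => f x ^ (2 * b)) μ)
    (hfab : Integrable (fun x => f x ^ (a + b)) μ) :
    moment f (a + b) μ ^ 2 ≤ moment f (2 * a) μ * moment f (2 * b) μ := by
  have e : ∀ k x, f x ^ (2 * k) = (f x ^ k) ^ 2 := fun k x => by ring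
  simp only [moment, Pi.pow_apply, e, pow_add] at hfa hfb hfab ⊢
  exact sq_integral_mul_le_integral_sq_mul_integral_sq hfa hfb hfab

theorem two_mul_integral_integral_sub_pow_le [IsFiniteMeasure μ] {n : ℕ} (hn : Even n)
    (hn0 : n ≠ 0) (hf : ∀ j ≤ n, Integrable (fun x => f x ^ j) μ)
    (hodd : ∀ j ≤ n, Odd j → moment f j μ = 0) :
    2 * ∫ x, ∫ y, (f x - f y) ^ n ∂μ ∂μ ≤ 2 ^ n * (μ.real Set.univ * moment f n μ) := by
  rw [integral_integral_sub_pow_of_even hn hf hodd]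
  refine two_mul_sum_choose_mul_le hn0 (fun m hm hm' => by rw [hodd m hm hm', zero_mul])
    fun m hm hm' => ?_
  have hsum : m + (n - m) = n := by omega
  have := moment_mul_moment_le_of_even hm' (hn.tsub hm') (hf m hm) (hf _ (by omega))
    (by rw [hsum]; exact hf n le_rfl)
  rwa [hsum] at this

theorem le_two_mul_integral_integral_sub_pow {n : ℕ} (hn0 : n ≠ 0)
    (hf : ∀ j ≤ 2 * n, Integrable (fun x => f x ^ j) μ)
    (hodd : ∀ j ≤ 2 * n, Odd j → moment f j μ = 0) :
    2 ^ (2 * n) * moment f n μ ^ 2 ≤ 2 * ∫ x, ∫ y, (f x - f y) ^ (2 * n) ∂μ ∂μ := by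
  rw [integral_integral_sub_pow_of_even (even_two_mul n) hf hodd]
  refine le_two_mul_sum_choose_mul (by omega) (fun m hm hm' => by rw [hodd m hm hm', zero_mul])
    fun m hm hm' => ?_
  obtain ⟨c, rfl⟩ := hm'
  have := sq_moment_add_le_moment_mul_moment (f := f) (μ := μ) (a := c) (b := n - c)
    (hf _ (by omega)) (hf _ (by omega)) (hf _ (by omega))
  rwa [show c + (n - c) = n by omega, show 2 * c = c + c by omega,
    show 2 * (n - c) = 2 * n - (c + c) by omega] at this

end Moments

lemma Function.Periodic.intervalIntegral_eq_zero_of_odd {g : ℝ → ℝ} {T : ℝ}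
    (hg : Function.Periodic g T) (hodd : ∀ x, g (-x) = -g x) : ∫ x in 0..T, g x = 0 := by
  have hshift : ∫ x in 0..T, g x = ∫ x in -(T / 2)..T / 2, g x := by
    simpa [show -(T / 2) + T = T / 2 by ring] using hg.intervalIntegral_add_eq 0 (-(T / 2))
  have hsymm := integral_comp_neg (a := -(T / 2)) (b := T / 2) g
  simp only [hodd, intervalIntegral.integral_neg, neg_neg] at hsymm
  linarith

theorem stmt6 (p : ℕ) (hp : 2 ≤ p) (hpe : Even p) :
    ∀ η : ℝ → ℝ, Measurable η →
      (∀ s, η (s + 2*π) = η s) → (∀ s, η (-s) = - η s) →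
      IntegrableOn (fun s => |η s|^(2*p)) (Set.Icc 0 (2*π)) →
      (∃ s, η s ≠ 0) →
      0 < (∫ s₁ in (0:ℝ)..(2*π), ∫ s₂ in (0:ℝ)..(2*π), (η s₁ - η s₂)^(2*p)) →
      (∫ s₁ in (0:ℝ)..(2*π), ∫ s₂ in (0:ℝ)..(2*π), (η s₁ - η s₂)^p)^2 /
        (2 * ∫ s₁ in (0:ℝ)..(2*π), ∫ s₂ in (0:ℝ)..(2*π), (η s₁ - η s₂)^(2*p))
        ≤ π^2 := by
  intro η hη hper hodd hint _ hpos
  have hπ : 0 ≤ 2 * π := by positivity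
  set μ := volume.restrict (Set.Ioc 0 (2 * π))
  have hμ : μ.real Set.univ = 2 * π := by simp [μ, hπ]
  have hpow : ∀ j ≤ 2 * p, Integrable (fun s => η s ^ j) μ := fun j hj =>
    integrable_pow_of_le hη.aestronglyMeasurable hj (hint.mono_set Set.Ioc_subset_Icc_self)
  have hodd_moment : ∀ j, Odd j → moment η j μ = 0 := fun j hj => by
    simp only [moment, Pi.pow_apply, μ, ← integral_of_le hπ]
    exact Function.Periodic.intervalIntegral_eq_zero_of_odd (fun s => by simp [hper])
      fun s => by simp [hodd, hj.neg_pow]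
  simp only [integral_of_le hπ] at hpos ⊢
  have hA := two_mul_integral_integral_sub_pow_le hpe (by omega)
    (fun j hj => hpow j (by omega)) fun j _ hj => hodd_moment j hj
  have hB := le_two_mul_integral_integral_sub_pow (by omega) hpow fun j _ hj => hodd_moment j hj
  have hA0 : 0 ≤ ∫ x, ∫ y, (η x - η y) ^ p ∂μ ∂μ :=
    integral_nonneg fun x => integral_nonneg fun y => hpe.pow_nonneg _
  rw [hμ] at hA
  rw [pow_mul'] at hB
  have hsq := pow_le_pow_left₀ (mul_nonneg zero_le_two hA0) hA 2
  rw [div_le_iff₀ (by positivity)]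
  nlinarith [mul_le_mul_of_nonneg_left hB (sq_nonneg π)]
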